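/- arXiv:1208.6478 — 2 statements merged into one kernel-verified Lean document; each statement's English description precedes it below -/
import Mathlib

section
/- Let V be a real Hilbert space, A a symmetric continuous coercive bilinear form on V, L a continuous linear functional, K ⊆ V nonempty closed convex, and F(u) = (1/2)A(u,u) − L(u). Then u ∈ K minimizes F over K if and only if A(u, v − u) − L(v − u) ≥ 0 for all v ∈ K. -/
/-- Characterization of the minimizer of `F u = ½ A(u,u) - L u` over a nonempty
closed convex `K` via the variational inequality `A(u, v-u) - L(v-u) ≥ 0`. -/
theorem min_quadratic_iff_variational_inequality
    {V : Type*} [NormedAddCommGroup V] [InnerProductSpace ℝ V] [CompleteSpace V]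
    (A : V →ₗ[ℝ] V →ₗ[ℝ] ℝ)
    (hsym : ∀ u v : V, A u v = A v u)
    (M : ℝ) (hM : 0 < M) (hcont : ∀ u v : V, |A u v| ≤ M * ‖u‖ * ‖v‖)
    (B : ℝ) (hB : 0 < B) (hcoer : ∀ u : V, A u u ≥ B * ‖u‖ ^ 2)
    (L : V →L[ℝ] ℝ)
    (K : Set V) (hKne : K.Nonempty) (hKcl : IsClosed K) (hKcv : Convex ℝ K)
    (u : V) (hu : u ∈ K) :
    (∀ v ∈ K, (1 / 2) * A u u - L u ≤ (1 / 2) * A v v - L v) ↔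
      (∀ v ∈ K, A u (v - u) - L (v - u) ≥ 0) := by
  have expand : ∀ e : V, A (u + e) (u + e) = A u u + 2 * A u e + A e e := by
    intro e
    have h := hsym e u
    simp only [map_add, LinearMap.add_apply]
    linarith
  constructor
  · intro hmin v hv
    set e := v - u with he
    by_contra hc
    push_neg at hc
    set c := A u e - L e with hcdef
    have hcneg : c < 0 := hc
    have hAee : A e e ≥ 0 := le_trans (by positivity) (hcoer e)
    set t : ℝ := min 1 (-c / (A e e + 1)) with ht
    have htpos : 0 < t := by
      apply lt_min one_pos
      apply div_pos (by linarith) (by linarith)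
    have ht1 : t ≤ 1 := min_le_left _ _
    have hw : u + t • e ∈ K := by
      have : u + t • e = (1 - t) • u + t • v := by
        rw [he]; module
      rw [this]
      exact hKcv hu hv (by linarith) (le_of_lt htpos) (by ring)
    have hF := hmin _ hw
    have hexp : A (u + t • e) (u + t • e) = A u u + 2 * (t * A u e) + t * (t * A e e) := by
      rw [expand (t • e)]
      simp only [map_smul, LinearMap.smul_apply, smul_eq_mul]
      try ring
    have hL : L (u + t • e) = L u + t * L e := by simp
    rw [hexp, hL] at hF
    -- hF : ... ≤ ..., derive t * c + t^2/2 * A e e ≥ 0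
    have key : c + t / 2 * A e e ≥ 0 := by
      have h1 : t * c + t * t / 2 * A e e ≥ 0 := by nlinarith [hF]
      nlinarith [htpos, h1]
    have htA : t * A e e < -c := by
      calc t * A e e ≤ (-c / (A e e + 1)) * A e e := by
            apply mul_le_mul_of_nonneg_right (min_le_right _ _) hAee
        _ < -c := by
            rw [div_mul_eq_mul_div, div_lt_iff₀ (by linarith)]
            nlinarith
    nlinarith
  · intro hvi v hv
    have h := hvi v hv
    set e := v - u with he
    have hAee : A e e ≥ 0 := le_trans (by positivity) (hcoer e)
    have hv' : v = u + e := by rw [he]; abel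
    have hexp : A v v = A u u + 2 * A u e + A e e := by rw [hv']; exact expand e
    have hL : L v = L u + L e := by rw [hv']; simp
    rw [hexp, hL]
    linarith
end

section
/- Let V be a real Hilbert space, A a symmetric continuous coercive bilinear form with coercivity constant B > 0, L a continuous linear functional, K ⊆ V closed convex, Φ : V → V* a monotone operator with kernel equal to K. Suppose ū ∈ K solves the variational inequality A(ū, v − ū) ≥ L(v − ū) for all v ∈ K, and for each θ > 0, ū_θ ∈ V solves A(ū_θ, v) + (1/θ)⟨Φ(ū_θ), v⟩ = L(v) for all v ∈ V. If ū_θ converges weakly to ū as θ → 0, then ū_θ converges strongly to ū in V. -/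
open Filter Topology

/-- Strong convergence of the penalty method: if `ū` solves the variational
inequality on `K`, `ū_θ` solves the penalized equation, and `ū_θ → ū` weakly
as `θ → 0⁺`, then the convergence is strong. -/
theorem penalty_strong_convergence
    {V : Type*} [NormedAddCommGroup V] [InnerProductSpace ℝ V] [CompleteSpace V]
    (A : V →ₗ[ℝ] V →ₗ[ℝ] ℝ)
    (hsym : ∀ u v : V, A u v = A v u)
    (M : ℝ) (hM : 0 < M) (hcont : ∀ u v : V, |A u v| ≤ M * ‖u‖ * ‖v‖)
    (B : ℝ) (hB : 0 < B) (hcoer : ∀ u : V, A u u ≥ B * ‖u‖ ^ 2)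
    (L : V →L[ℝ] ℝ)
    (K : Set V) (hKcl : IsClosed K) (hKcv : Convex ℝ K)
    (Φ : V → (V →L[ℝ] ℝ))
    (hmono : ∀ u v : V, (Φ u - Φ v) (u - v) ≥ 0)
    (hker : ∀ u : V, Φ u = 0 ↔ u ∈ K)
    (ubar : V) (hubar : ubar ∈ K)
    (hVI : ∀ v ∈ K, A ubar (v - ubar) ≥ L (v - ubar))
    (uθ : ℝ → V)
    (hpen : ∀ θ : ℝ, 0 < θ → ∀ v : V,
      A (uθ θ) v + (1 / θ) * (Φ (uθ θ)) v = L v)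
    (hweak : ∀ Y : V →L[ℝ] ℝ,
      Tendsto (fun θ => Y (uθ θ)) (𝓝[>] 0) (𝓝 (Y ubar))) :
    Tendsto (fun θ => ‖uθ θ - ubar‖) (𝓝[>] 0) (𝓝 0) := by
  -- continuous linear functional Y v = L v - A ubar v
  set Aubar : V →L[ℝ] ℝ := LinearMap.mkContinuous (A ubar) (M * ‖ubar‖)
    (fun v => by
      have := hcont ubar v
      simpa [Real.norm_eq_abs, mul_assoc] using this) with hAubar
  set Y : V →L[ℝ] ℝ := L - Aubar with hY
  have hPhiubar : Φ ubar = 0 := (hker ubar).mpr hubar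
  -- key estimate
  have key : ∀ θ : ℝ, 0 < θ → B * ‖uθ θ - ubar‖ ^ 2 ≤ Y (uθ θ) - Y ubar := by
    intro θ hθ
    have hm : (Φ (uθ θ)) (uθ θ - ubar) ≥ 0 := by
      have := hmono (uθ θ) ubar
      simpa [hPhiubar] using this
    have hle : A (uθ θ) (uθ θ - ubar) ≤ L (uθ θ - ubar) := by
      have heq := hpen θ hθ (uθ θ - ubar)
      nlinarith [mul_nonneg (le_of_lt (one_div_pos.mpr hθ)) hm]
    have hco := hcoer (uθ θ - ubar)
    have hexp : A (uθ θ - ubar) (uθ θ - ubar)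
        = A (uθ θ) (uθ θ - ubar) - A ubar (uθ θ - ubar) := by
      simp only [map_sub, LinearMap.sub_apply]
      rw [hsym (uθ θ) ubar]
    have hYexp : Y (uθ θ) - Y ubar = L (uθ θ - ubar) - A ubar (uθ θ - ubar) := by
      simp [hY, hAubar, LinearMap.mkContinuous_apply, map_sub]
      ring
    linarith [hexp ▸ hco]
  -- squeeze
  have hYt : Tendsto (fun θ => Y (uθ θ) - Y ubar) (𝓝[>] 0) (𝓝 0) := by
    have := (hweak Y).sub_const (Y ubar)
    simpa using this
  have hsq : Tendsto (fun θ => ‖uθ θ - ubar‖ ^ 2) (𝓝[>] 0) (𝓝 0) := by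
    have h0 : Tendsto (fun θ => (Y (uθ θ) - Y ubar) / B) (𝓝[>] 0) (𝓝 0) := by
      simpa using hYt.div_const B
    refine squeeze_zero' ?_ ?_ h0
    · exact Filter.Eventually.of_forall fun θ => by positivity
    · filter_upwards [self_mem_nhdsWithin] with θ hθ
      rw [le_div_iff₀ hB]
      nlinarith [key θ hθ]
  have : Tendsto (fun θ => Real.sqrt (‖uθ θ - ubar‖ ^ 2)) (𝓝[>] 0) (𝓝 0) := by
    simpa using hsq.sqrt
  simpa [Function.comp_def, Real.sqrt_sq (norm_nonneg _)] using this
end
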